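/- Let 𝓕 be a nonempty set of spanning forests on N, and let A_1, A_2, A_3 be three atoms of the algebra A_𝓕. For i = 1, 2, 3 let 𝓕_{A_i} ⊆ 𝓕 be the set of forests F having two trees such that A_i is contained in the vertex set of one of them and both of the remaining two atoms are contained in the vertex set of the other; let 𝓕_* ⊆ 𝓕 be the set of forests in which the three atoms A_1, A_2, A_3 are contained in three pairwise distinct trees. Then either 𝓕_* ≠ ∅ or at most one of the sets 𝓕_{A_1}, 𝓕_{A_2}, 𝓕_{A_3} is empty. -/
import Mathlib


open Relation

/-- A digraph with an explicit vertex set and an arc relation. -/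
structure Dgraph (V : Type*) where
  verts : Set V
  Arc : V → V → Prop

namespace Dgraph

variable {V : Type*}

/-- All arcs have both endpoints among the vertices. -/
def Wf (G : Dgraph V) : Prop := ∀ ⦃x y⦄, G.Arc x y → x ∈ G.verts ∧ y ∈ G.verts

/-- An entering forest: at most one arc outgoes from each vertex and there
are no directed cycles (no arc `(x,y)` such that `x` is reachable from `y`). -/
def IsForest (G : Dgraph V) : Prop :=
  G.Wf ∧ (∀ ⦃x y z⦄, G.Arc x y → G.Arc x z → y = z) ∧
    ∀ ⦃x y⦄, G.Arc x y → ¬ ReflTransGen G.Arc y x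

/-- An entering tree: a connected entering forest, i.e. an entering forest
with a (root) vertex reachable from every vertex. -/
def IsTree (G : Dgraph V) : Prop :=
  G.IsForest ∧ ∃ r ∈ G.verts, ∀ x ∈ G.verts, ReflTransGen G.Arc x r

/-- A root: a vertex with no outgoing arc. -/
def IsRoot (G : Dgraph V) (r : V) : Prop := r ∈ G.verts ∧ ∀ y, ¬ G.Arc r y

/-- The set of roots. -/
def roots (G : Dgraph V) : Set V := {x | G.IsRoot x}

/-- The subgraph induced by a set of vertices. -/
def induce (G : Dgraph V) (S : Set V) : Dgraph V :=
  ⟨S, fun x y => G.Arc x y ∧ x ∈ S ∧ y ∈ S⟩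

/-- Subgraph relation. -/
def IsSubgraph (H G : Dgraph V) : Prop :=
  H.verts ⊆ G.verts ∧ ∀ ⦃x y⦄, H.Arc x y → G.Arc x y

/-- Two vertices lie in the same connected component (weak connectivity). -/
def SameTree (G : Dgraph V) (x y : V) : Prop :=
  ReflTransGen (fun a b => G.Arc a b ∨ G.Arc b a) x y

/-- The vertex set of the connected component containing `v`. -/
def compVerts (G : Dgraph V) (v : V) : Set V := {x | x ∈ G.verts ∧ G.SameTree x v}

/-- `X` is the vertex set of a connected component of `G`. -/
def IsCompOf (G : Dgraph V) (X : Set V) : Prop :=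
  ∃ v ∈ G.verts, X = G.compVerts v

/-- The family of vertex sets of the trees (connected components) of a forest:
for each root `r`, the set of vertices from which `r` is reachable. -/
def treeSets (G : Dgraph V) : Set (Set V) :=
  {S | ∃ r ∈ G.roots, S = {x | x ∈ G.verts ∧ ReflTransGen G.Arc x r}}

/-- The inclusion-maximal subtree rooted at `b`: its vertices are those from
which `b` is reachable, with all arcs of `G` between them except the arc
outgoing from `b`. -/
def maxSubtree (G : Dgraph V) (b : V) : Dgraph V :=
  ⟨{x | ReflTransGen G.Arc x b},
   fun x y => G.Arc x y ∧ ReflTransGen G.Arc x b ∧ ReflTransGen G.Arc y b ∧ x ≠ b⟩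

/-- `F^G_{↑D}`: replace the arcs of `F` outgoing from vertices of `D`
by the arcs of `G` outgoing from those vertices. -/
def replace (F G : Dgraph V) (D : Set V) : Dgraph V :=
  ⟨F.verts, fun x y => (x ∈ D ∧ G.Arc x y) ∨ (x ∉ D ∧ F.Arc x y)⟩

/-- Delete the arcs outgoing from the vertices of `S`. -/
def delOut (G : Dgraph V) (S : Set V) : Dgraph V :=
  ⟨G.verts, fun x y => G.Arc x y ∧ x ∉ S⟩

end Dgraph

/-- A spanning forest of the digraph with arc relation `R` on the whole
vertex type: an entering forest on all the vertices whose arcs are arcs of `R`. -/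
def IsSpanForest {V : Type*} (R : V → V → Prop) (F : Dgraph V) : Prop :=
  F.verts = Set.univ ∧ F.IsForest ∧ ∀ ⦃x y⦄, F.Arc x y → R x y

/-- A spanning forest consisting of exactly `k` trees (`F ∈ 𝓕^k`);
the number of trees equals the number of roots. -/
def SpForest {V : Type*} (R : V → V → Prop) (k : ℕ) (F : Dgraph V) : Prop :=
  IsSpanForest R F ∧ F.roots.ncard = k

open Classical in
/-- `Υ^F_S`: the sum of the weights of the arcs of `F` whose tails lie in `S`. -/
noncomputable def wtOn {V : Type*} [Fintype V] (w : V → V → ℝ) (F : Dgraph V)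
    (S : Set V) : ℝ :=
  ∑ x : V, ∑ y : V, if x ∈ S ∧ F.Arc x y then w x y else 0

/-- `Υ^F`: the total weight of the forest. -/
noncomputable def wt {V : Type*} [Fintype V] (w : V → V → ℝ) (F : Dgraph V) : ℝ :=
  wtOn w F Set.univ

/-- `φ^k`: the minimal weight of a `k`-component spanning forest
(`⊤ = ∞` if there is none; the infimum is attained since `V` is finite). -/
noncomputable def phi {V : Type*} [Fintype V] (R : V → V → Prop) (w : V → V → ℝ)
    (k : ℕ) : EReal :=
  sInf ((fun F => (wt w F : EReal)) '' {F | SpForest R k F})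

/-- `F ∈ 𝓕̃^k`: a minimal `k`-component spanning forest. -/
def MinForest {V : Type*} [Fintype V] (R : V → V → Prop) (w : V → V → ℝ)
    (k : ℕ) (F : Dgraph V) : Prop :=
  SpForest R k F ∧ (wt w F : EReal) = phi R w k

/-- The algebra of subsets generated by a family `B`: the smallest family
containing `B` and closed under complements and intersections. -/
inductive InAlg {V : Type*} (B : Set (Set V)) : Set V → Prop
  | base {s : Set V} : s ∈ B → InAlg B s
  | compl {s : Set V} : InAlg B s → InAlg B sᶜ
  | inter {s t : Set V} : InAlg B s → InAlg B t → InAlg B (s ∩ t)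

/-- An atom of an algebra of subsets: a nonempty member `E` such that every
member `B` satisfies `E ∩ B = ∅` or `E ∩ B = E`. -/
def IsAtomOfAlg {V : Type*} (A : Set V → Prop) (E : Set V) : Prop :=
  A E ∧ E.Nonempty ∧ ∀ B, A B → E ∩ B = ∅ ∨ E ∩ B = E

/-- The algebra `𝔄_k` generated by the vertex sets of trees of the minimal
`k`-component spanning forests. -/
def algebraK {V : Type*} [Fintype V] (R : V → V → Prop) (w : V → V → ℝ)
    (k : ℕ) : Set V → Prop :=
  InAlg {S | ∃ F : Dgraph V, MinForest R w k F ∧ S ∈ F.treeSets}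

/-- An atom of the algebra `𝔄_k`. -/
def AtomK {V : Type*} [Fintype V] (R : V → V → Prop) (w : V → V → ℝ)
    (k : ℕ) (E : Set V) : Prop :=
  IsAtomOfAlg (algebraK R w k) E

/-- A labeled atom of `𝔄_k`: an atom containing the root of some minimal
`k`-component spanning forest. -/
def LabeledAtom {V : Type*} [Fintype V] (R : V → V → Prop) (w : V → V → ℝ)
    (k : ℕ) (E : Set V) : Prop :=
  AtomK R w k E ∧ ∃ F : Dgraph V, MinForest R w k F ∧ ∃ r ∈ F.roots, r ∈ E

/-- An unlabeled atom of `𝔄_k`. -/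
def UnlabeledAtom {V : Type*} [Fintype V] (R : V → V → Prop) (w : V → V → ℝ)
    (k : ℕ) (E : Set V) : Prop :=
  AtomK R w k E ∧ ¬ ∃ F : Dgraph V, MinForest R w k F ∧ ∃ r ∈ F.roots, r ∈ E
/-- `F ∈ 𝓕_{X}` (relative to atoms `X, Y, Z`): `F` has two distinct trees such
that `X` is contained in the vertex set of one of them and both `Y` and `Z`
are contained in the vertex set of the other. -/
def TwoTreesSplit {V : Type*} (F : Dgraph V) (X Y Z : Set V) : Prop :=
  ∃ S ∈ F.treeSets, ∃ T ∈ F.treeSets, S ≠ T ∧ X ⊆ S ∧ Y ⊆ T ∧ Z ⊆ T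

section Aux

variable {V : Type*}

/-- In a finite spanning forest, every vertex reaches a root. -/
lemma aux_exists_root_reach [Fintype V] {F : Dgraph V} (hF : F.IsForest)
    (hv : F.verts = Set.univ) (x : V) :
    ∃ r, F.IsRoot r ∧ ReflTransGen F.Arc x r := by
  classical
  have key : ∀ n (x : V), ({y | ReflTransGen F.Arc x y}).ncard ≤ n →
      ∃ r, F.IsRoot r ∧ ReflTransGen F.Arc x r := by
    intro n
    induction n with
    | zero =>
      intro x h
      exfalso
      have hx : x ∈ {y | ReflTransGen F.Arc x y} := ReflTransGen.refl
      have := Set.ncard_pos (Set.toFinite _) |>.mpr ⟨x, hx⟩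
      omega
    | succ n ih =>
      intro x h
      by_cases hx : ∀ y, ¬ F.Arc x y
      · exact ⟨x, ⟨by simp [hv], hx⟩, ReflTransGen.refl⟩
      · push_neg at hx
        obtain ⟨y, hxy⟩ := hx
        have hsub : {z | ReflTransGen F.Arc y z} ⊆ {z | ReflTransGen F.Arc x z} :=
          fun z hz => (ReflTransGen.single hxy).trans hz
        have hxnot : x ∉ {z | ReflTransGen F.Arc y z} := hF.2.2 hxy
        have hlt : ({z | ReflTransGen F.Arc y z}).ncard <
            ({z | ReflTransGen F.Arc x z}).ncard :=
          Set.ncard_lt_ncard ⟨hsub, fun hc => hxnot (hc ReflTransGen.refl)⟩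
            (Set.toFinite _)
        obtain ⟨r, hr, hreach⟩ := ih y (by omega)
        exact ⟨r, hr, (ReflTransGen.single hxy).trans hreach⟩
  exact key _ x le_rfl

/-- Atom dichotomy: an atom is contained in or disjoint from each member. -/
lemma aux_atom_dicho {A C : Set V} {𝔄 : Set V → Prop}
    (hA : IsAtomOfAlg 𝔄 A) (hC : 𝔄 C) : A ⊆ C ∨ A ∩ C = ∅ := by
  rcases hA.2.2 C hC with h | h
  · exact Or.inr h
  · exact Or.inl (Set.inter_eq_left.mp h)

/-- Every atom is contained in some tree set of each forest of `𝓕`. -/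
lemma aux_atom_in_tree [Fintype V] {𝓕 : Set (Dgraph V)}
    (h𝓕 : ∀ F ∈ 𝓕, F.verts = Set.univ ∧ F.IsForest)
    {A : Set V} (hA : IsAtomOfAlg (InAlg {S | ∃ F ∈ 𝓕, S ∈ Dgraph.treeSets F}) A)
    {F : Dgraph V} (hF : F ∈ 𝓕) : ∃ T ∈ F.treeSets, A ⊆ T := by
  obtain ⟨a, ha⟩ := hA.2.1
  obtain ⟨hv, hforest⟩ := h𝓕 F hF
  obtain ⟨r, hr, hreach⟩ := aux_exists_root_reach hforest hv a
  refine ⟨{x | x ∈ F.verts ∧ ReflTransGen F.Arc x r}, ⟨r, hr, rfl⟩, ?_⟩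
  rcases aux_atom_dicho hA (InAlg.base (B := {S | ∃ F ∈ 𝓕, S ∈ Dgraph.treeSets F})
      ⟨F, hF, ⟨r, hr, rfl⟩⟩) with h | h
  · exact h
  · exfalso
    have : a ∈ A ∩ {x | x ∈ F.verts ∧ ReflTransGen F.Arc x r} :=
      ⟨ha, by simp [hv], hreach⟩
    simp [h] at this

/-- Separation of distinct atoms by a generator. -/
lemma aux_sep {B : Set (Set V)} {A1 A2 : Set V}
    (h1 : IsAtomOfAlg (InAlg B) A1) (h2 : IsAtomOfAlg (InAlg B) A2)
    (hne : A1 ≠ A2) :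
    ∃ S ∈ B, (A1 ⊆ S ∧ A2 ∩ S = ∅) ∨ (A2 ⊆ S ∧ A1 ∩ S = ∅) := by
  by_contra hcon
  push_neg at hcon
  have hd1 : ∀ {C}, InAlg B C → A1 ⊆ C ∨ A1 ∩ C = ∅ :=
    fun hC => aux_atom_dicho h1 hC
  have hd2 : ∀ {C}, InAlg B C → A2 ⊆ C ∨ A2 ∩ C = ∅ :=
    fun hC => aux_atom_dicho h2 hC
  have hne1 : A1.Nonempty := h1.2.1
  have hne2 : A2.Nonempty := h2.2.1
  have key : ∀ C, InAlg B C → (A1 ⊆ C ↔ A2 ⊆ C) := by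
    intro C hC
    induction hC with
    | base hS =>
      rename_i S
      have := hcon S hS
      rcases hd1 (InAlg.base hS) with h1' | h1' <;>
        rcases hd2 (InAlg.base hS) with h2' | h2'
      · exact ⟨fun _ => h2', fun _ => h1'⟩
      · obtain ⟨a, ha⟩ := this.1 h1'
        rw [h2'] at ha
        exact absurd ha (Set.notMem_empty a)
      · obtain ⟨a, ha⟩ := this.2 h2'
        rw [h1'] at ha
        exact absurd ha (Set.notMem_empty a)
      · constructor <;> intro hsub <;> exfalso
        · obtain ⟨a, ha⟩ := hne1
          have : a ∈ A1 ∩ S := ⟨ha, hsub ha⟩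
          simp [h1'] at this
        · obtain ⟨a, ha⟩ := hne2
          have : a ∈ A2 ∩ S := ⟨ha, hsub ha⟩
          simp [h2'] at this
    | compl hs ih =>
      rename_i s
      have e1 : A1 ⊆ sᶜ ↔ ¬ A1 ⊆ s := by
        constructor
        · intro h hsub
          obtain ⟨a, ha⟩ := hne1
          exact (h ha) (hsub ha)
        · intro h
          rcases hd1 hs with h' | h'
          · exact absurd h' h
          · intro a ha hs'
            have : a ∈ A1 ∩ s := ⟨ha, hs'⟩
            simp [h'] at this
      have e2 : A2 ⊆ sᶜ ↔ ¬ A2 ⊆ s := by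
        constructor
        · intro h hsub
          obtain ⟨a, ha⟩ := hne2
          exact (h ha) (hsub ha)
        · intro h
          rcases hd2 hs with h' | h'
          · exact absurd h' h
          · intro a ha hs'
            have : a ∈ A2 ∩ s := ⟨ha, hs'⟩
            simp [h'] at this
      rw [e1, e2, ih]
    | inter hs ht ihs iht =>
      simp only [Set.subset_inter_iff]
      rw [ihs, iht]
  have hsub : A2 ⊆ A1 := (key A1 h1.1).mp (subset_refl A1)
  have : A1 ∩ A2 ≠ ∅ := by
    obtain ⟨a, ha⟩ := hne2
    intro h
    have : a ∈ A1 ∩ A2 := ⟨hsub ha, ha⟩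
    simp [h] at this
  rcases h1.2.2 A2 h2.1 with h | h
  · exact this h
  · exact hne (subset_antisymm (Set.inter_eq_left.mp h) hsub)

/-- Three atoms in three pairwise distinct trees of `F`. -/
def ThreeSplit (F : Dgraph V) (X Y Z : Set V) : Prop :=
  ∃ S ∈ F.treeSets, ∃ T ∈ F.treeSets, ∃ U ∈ F.treeSets,
    S ≠ T ∧ S ≠ U ∧ T ≠ U ∧ X ⊆ S ∧ Y ⊆ T ∧ Z ⊆ U

lemma aux_core [Fintype V] {𝓕 : Set (Dgraph V)}
    (h𝓕 : ∀ F ∈ 𝓕, F.verts = Set.univ ∧ F.IsForest)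
    {X Y Z : Set V}
    (hX : IsAtomOfAlg (InAlg {S | ∃ F ∈ 𝓕, S ∈ Dgraph.treeSets F}) X)
    (hY : IsAtomOfAlg (InAlg {S | ∃ F ∈ 𝓕, S ∈ Dgraph.treeSets F}) Y)
    (hZ : IsAtomOfAlg (InAlg {S | ∃ F ∈ 𝓕, S ∈ Dgraph.treeSets F}) Z)
    {F : Dgraph V} (hF : F ∈ 𝓕) {S : Set V} (hS : S ∈ F.treeSets)
    (hXS : X ⊆ S) (hYS : Y ∩ S = ∅) :
    ThreeSplit F X Y Z ∨ TwoTreesSplit F X Y Z ∨ TwoTreesSplit F Y X Z := by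
  obtain ⟨T, hT, hYT⟩ := aux_atom_in_tree h𝓕 hY hF
  obtain ⟨y0, hy0⟩ := hY.2.1
  have hST : S ≠ T := by
    intro h
    have : y0 ∈ Y ∩ S := ⟨hy0, h ▸ hYT hy0⟩
    simp [hYS] at this
  have hbase : ∀ {C : Set V}, C ∈ F.treeSets → InAlg {S | ∃ F ∈ 𝓕, S ∈ Dgraph.treeSets F} C :=
    fun hC => InAlg.base ⟨F, hF, hC⟩
  obtain ⟨z0, hz0⟩ := hZ.2.1
  rcases aux_atom_dicho hZ (hbase hS) with hZS | hZS
  · -- Z ⊆ S : F splits with Y alone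
    exact Or.inr (Or.inr ⟨T, hT, S, hS, Ne.symm hST, hYT, hXS, hZS⟩)
  rcases aux_atom_dicho hZ (hbase hT) with hZT | hZT
  · -- Z ⊆ T : F splits with X alone
    exact Or.inr (Or.inl ⟨S, hS, T, hT, hST, hXS, hYT, hZT⟩)
  · obtain ⟨U, hU, hZU⟩ := aux_atom_in_tree h𝓕 hZ hF
    have hSU : S ≠ U := by
      intro h
      have : z0 ∈ Z ∩ S := ⟨hz0, h ▸ hZU hz0⟩
      simp [hZS] at this
    have hTU : T ≠ U := by
      intro h
      have : z0 ∈ Z ∩ T := ⟨hz0, h ▸ hZU hz0⟩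
      simp [hZT] at this
    exact Or.inl ⟨S, hS, T, hT, U, hU, hST, hSU, hTU, hXS, hYT, hZU⟩

lemma aux_pair [Fintype V] {𝓕 : Set (Dgraph V)}
    (h𝓕 : ∀ F ∈ 𝓕, F.verts = Set.univ ∧ F.IsForest)
    {X Y Z : Set V}
    (hX : IsAtomOfAlg (InAlg {S | ∃ F ∈ 𝓕, S ∈ Dgraph.treeSets F}) X)
    (hY : IsAtomOfAlg (InAlg {S | ∃ F ∈ 𝓕, S ∈ Dgraph.treeSets F}) Y)
    (hZ : IsAtomOfAlg (InAlg {S | ∃ F ∈ 𝓕, S ∈ Dgraph.treeSets F}) Z)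
    (hXY : X ≠ Y) :
    (∃ F ∈ 𝓕, ThreeSplit F X Y Z) ∨
      (∃ F ∈ 𝓕, TwoTreesSplit F X Y Z) ∨ (∃ F ∈ 𝓕, TwoTreesSplit F Y X Z) := by
  obtain ⟨S, ⟨F, hF, hS⟩, hcase⟩ := aux_sep hX hY hXY
  rcases hcase with ⟨h1, h2⟩ | ⟨h1, h2⟩
  · rcases aux_core h𝓕 hX hY hZ hF hS h1 h2 with h | h | h
    · exact Or.inl ⟨F, hF, h⟩
    · exact Or.inr (Or.inl ⟨F, hF, h⟩)
    · exact Or.inr (Or.inr ⟨F, hF, h⟩)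
  · rcases aux_core h𝓕 hY hX hZ hF hS h1 h2 with h | h | h
    · obtain ⟨S, hS', T, hT, U, hU, h1', h2', h3', hy, hx, hz⟩ := h
      exact Or.inl ⟨F, hF, T, hT, S, hS', U, hU, Ne.symm h1', h3', h2', hx, hy, hz⟩
    · exact Or.inr (Or.inr ⟨F, hF, h⟩)
    · exact Or.inr (Or.inl ⟨F, hF, h⟩)

end Aux

/-- for three atoms `A1, A2, A3` of the algebra generated by a
nonempty set `𝓕` of spanning forests, either some forest of `𝓕` contains the
three atoms in three pairwise distinct trees, or at most one of the sets
`𝓕_{A1}, 𝓕_{A2}, 𝓕_{A3}` is empty (i.e. at least two are nonempty). -/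
theorem stmt2 {V : Type*} [Fintype V] [DecidableEq V]
    (𝓕 : Set (Dgraph V)) (h𝓕ne : 𝓕.Nonempty)
    (h𝓕 : ∀ F ∈ 𝓕, F.verts = Set.univ ∧ F.IsForest)
    (A1 A2 A3 : Set V)
    (h12 : A1 ≠ A2) (h13 : A1 ≠ A3) (h23 : A2 ≠ A3)
    (hA1 : IsAtomOfAlg (InAlg {S | ∃ F ∈ 𝓕, S ∈ Dgraph.treeSets F}) A1)
    (hA2 : IsAtomOfAlg (InAlg {S | ∃ F ∈ 𝓕, S ∈ Dgraph.treeSets F}) A2)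
    (hA3 : IsAtomOfAlg (InAlg {S | ∃ F ∈ 𝓕, S ∈ Dgraph.treeSets F}) A3) :
    (∃ F ∈ 𝓕, ∃ S ∈ F.treeSets, ∃ T ∈ F.treeSets, ∃ U ∈ F.treeSets,
        S ≠ T ∧ S ≠ U ∧ T ≠ U ∧ A1 ⊆ S ∧ A2 ⊆ T ∧ A3 ⊆ U) ∨
      ((∃ F ∈ 𝓕, TwoTreesSplit F A1 A2 A3) ∧ (∃ F ∈ 𝓕, TwoTreesSplit F A2 A1 A3)) ∨
      ((∃ F ∈ 𝓕, TwoTreesSplit F A1 A2 A3) ∧ (∃ F ∈ 𝓕, TwoTreesSplit F A3 A1 A2)) ∨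
      ((∃ F ∈ 𝓕, TwoTreesSplit F A2 A1 A3) ∧ (∃ F ∈ 𝓕, TwoTreesSplit F A3 A1 A2)) := by
  classical
  have perm13 : ∀ F : Dgraph V, ThreeSplit F A1 A3 A2 → ThreeSplit F A1 A2 A3 := by
    rintro F ⟨S, hS, T, hT, U, hU, h1, h2, h3, hx, hz, hy⟩
    exact ⟨S, hS, U, hU, T, hT, h2, h1, Ne.symm h3, hx, hy, hz⟩
  have perm23 : ∀ F : Dgraph V, ThreeSplit F A2 A3 A1 → ThreeSplit F A1 A2 A3 := by
    rintro F ⟨S, hS, T, hT, U, hU, h1, h2, h3, h2s, h3t, h1u⟩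
    exact ⟨U, hU, S, hS, T, hT, Ne.symm h2, Ne.symm h3, h1, h1u, h2s, h3t⟩
  have swap : ∀ (F : Dgraph V) (X Y Z : Set V),
      TwoTreesSplit F X Y Z → TwoTreesSplit F X Z Y := by
    rintro F X Y Z ⟨S, hS, T, hT, hne, hx, hy, hz⟩
    exact ⟨S, hS, T, hT, hne, hx, hz, hy⟩
  rcases aux_pair h𝓕 hA1 hA2 hA3 h12 with ⟨F, hF, h⟩ | P12
  · exact Or.inl ⟨F, hF, h⟩
  rcases aux_pair h𝓕 hA1 hA3 hA2 h13 with ⟨F, hF, h⟩ | P13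
  · exact Or.inl ⟨F, hF, perm13 F h⟩
  rcases aux_pair h𝓕 hA2 hA3 hA1 h23 with ⟨F, hF, h⟩ | P23
  · exact Or.inl ⟨F, hF, perm23 F h⟩
  have h13' : (∃ F ∈ 𝓕, TwoTreesSplit F A1 A2 A3) ∨
      (∃ F ∈ 𝓕, TwoTreesSplit F A3 A1 A2) :=
    P13.imp (fun ⟨F, hF, h⟩ => ⟨F, hF, swap F _ _ _ h⟩) id
  have h23' : (∃ F ∈ 𝓕, TwoTreesSplit F A2 A1 A3) ∨
      (∃ F ∈ 𝓕, TwoTreesSplit F A3 A1 A2) :=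
    P23.imp (fun ⟨F, hF, h⟩ => ⟨F, hF, swap F _ _ _ h⟩)
      (fun ⟨F, hF, h⟩ => ⟨F, hF, swap F _ _ _ h⟩)
  rcases P12 with p | q
  · rcases h23' with q | r
    · exact Or.inr (Or.inl ⟨p, q⟩)
    · exact Or.inr (Or.inr (Or.inl ⟨p, r⟩))
  · rcases h13' with p | r
    · exact Or.inr (Or.inl ⟨p, q⟩)
    · exact Or.inr (Or.inr (Or.inr ⟨q, r⟩))
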